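/- Let k_1, k_2 be positive integers of the same parity, r_i = ⌈(k_i+1)/2⌉, and σ_{k,h} defined combinatorially as in the β-Hermite minor process (σ_{k,h} = k·|C_{k-1}^h| where C_{k-1}^h is the set of ±1-paths of length k-1 from 1 to 2h-1+[k even]). Then ∑_{h=1}^{min(r_1,r_2)} σ_{k_1,h}·σ_{k_2,h} = (2 k_1 k_2 / (k_1+k_2)) · binom(k_1+k_2-2, (k_1+k_2-2)/2) = k_1 k_2 · C_{(k_1+k_2-2)/2}. -/

import Mathlib

/-- ±1-step paths with `n` steps (`n+1` vertices) on the positive integers,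
starting at 1 and ending at `e`. -/
def PMPath (n e : ℕ) : Type :=
  {i : Fin (n + 1) → ℕ //
    (∀ j, 1 ≤ i j) ∧
    (∀ j : Fin n, ((i j.castSucc : ℤ) - i j.succ).natAbs = 1) ∧
    i 0 = 1 ∧ i (Fin.last n) = e}

/-- `σ_{k,h} = k·|C_{k-1}^h|` where `C_{k-1}^h` is the set of ±1-paths of length `k-1`
on the positive integers from `1` to `2h-1` (`k` odd) resp. `2h` (`k` even). -/
noncomputable def sigma (k h : ℕ) : ℕ :=
  k * Nat.card (PMPath (k - 1) (if Odd k then 2 * h - 1 else 2 * h))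

/-!
Since `σ_{k,h} = k·b(k-1, e_h)`, where `b(n, e)` is the number of positive `±1`-paths with `n`
steps from `1` to `e`, the sum is `k₁k₂ ∑_e b(k₁-1, e)·b(k₂-1, e)`. Gluing a path of length `n`
ending at `e` to the reverse of one of length `m` ending at `e` gives a positive path of length
`n + m` from `1` to `1`, so the sum is `b(k₁+k₂-2, 1)`; algebraically, `∑_e b(n, e) b(m, e)` is
unchanged when a step is moved from `m` to `n`, because the one-step recursion is symmetric.
Finally `b(2c, 1) = C(2c, c) - C(2c, c+1) = Catalan(c)` by the ballot formula, and
`C(2c, c) = (c+1)·Catalan(c)` gives the binomial form.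
-/

open Finset

def ballot : ℕ → ℕ → ℕ
  | 0, e => if e = 1 then 1 else 0
  | _ + 1, 0 => 0
  | n + 1, e + 1 => ballot n e + ballot n (e + 2)

namespace ballot

lemma zero_left (e : ℕ) : ballot 0 e = if e = 1 then 1 else 0 := rfl

lemma zero_right (n : ℕ) : ballot n 0 = 0 := by cases n <;> rfl

lemma succ_succ (n e : ℕ) : ballot (n + 1) (e + 1) = ballot n e + ballot n (e + 2) := rfl

lemma eq_zero_of_lt {n e : ℕ} (h : n + 1 < e) : ballot n e = 0 := by
  induction n generalizing e with
  | zero => rw [zero_left, if_neg (by omega)]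
  | succ n ih =>
    obtain ⟨e, rfl⟩ : ∃ e', e = e' + 1 := ⟨e - 1, by omega⟩
    rw [succ_succ, ih (by omega), ih (by omega)]

lemma eq_zero_of_even {n e : ℕ} (h : Even (n + e)) : ballot n e = 0 := by
  induction n generalizing e with
  | zero => simp only [zero_left]; grind
  | succ n ih =>
    rcases e with _ | e
    · exact zero_right _
    · rw [succ_succ, ih (by grind), ih (by grind)]

lemma bounds_of_ne_zero {n e : ℕ} (h : ballot n e ≠ 0) : 1 ≤ e ∧ e ≤ n + 1 ∧ Odd (n + e) := by
  refine ⟨?_, ?_, ?_⟩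
  · by_contra! he
    exact h (by rw [Nat.lt_one_iff.mp he, zero_right])
  · by_contra! he
    exact h (eq_zero_of_lt he)
  · by_contra he
    exact h (eq_zero_of_even (Nat.not_odd_iff_even.mp he))

theorem cast_eq_choose_sub_choose {n e : ℕ} (h : Odd (n + e)) :
    (ballot n e : ℤ) = n.choose ((n + e - 1) / 2) - n.choose ((n + e + 1) / 2) := by
  induction n generalizing e with
  | zero =>
    obtain ⟨a, rfl⟩ : ∃ a, e = 2 * a + 1 := by simpa [Odd] using h
    rcases a with _ | a <;> simp [zero_left, Nat.choose_eq_zero_of_lt]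
  | succ n ih =>
    rw [Nat.odd_iff] at h
    rcases e with _ | e
    · obtain ⟨a, rfl⟩ : ∃ a, n = 2 * a := ⟨n / 2, by omega⟩
      rw [zero_right, show (2 * a + 1 + 0 - 1) / 2 = a by omega,
        show (2 * a + 1 + 0 + 1) / 2 = a + 1 by omega, Nat.choose_symm_half, Nat.cast_zero,
        sub_self]
    · obtain ⟨a, ha⟩ : ∃ a, n + e = 2 * a + 1 := ⟨(n + e) / 2, by omega⟩
      rw [succ_succ, Nat.cast_add, ih (by rw [Nat.odd_iff]; omega),
        ih (by rw [Nat.odd_iff]; omega),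
        show (n + 1 + (e + 1) - 1) / 2 = a + 1 by omega,
        show (n + 1 + (e + 1) + 1) / 2 = a + 2 by omega,
        show (n + e - 1) / 2 = a by omega, show (n + e + 1) / 2 = a + 1 by omega,
        show (n + (e + 2) - 1) / 2 = a + 1 by omega, show (n + (e + 2) + 1) / 2 = a + 2 by omega,
        Nat.choose_succ_succ', Nat.choose_succ_succ']
      push_cast
      ring

theorem two_mul_one_eq_catalan (c : ℕ) : ballot (2 * c) 1 = catalan c := by
  have hrefl := cast_eq_choose_sub_choose (n := 2 * c) (e := 1) (by simp)
  rw [show (2 * c + 1 - 1) / 2 = c by omega, show (2 * c + 1 + 1) / 2 = c + 1 by omega] at hrefl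
  have hcat : ((c + 1) * catalan c : ℤ) = (2 * c).choose c := by
    exact_mod_cast (Nat.centralBinom_eq_two_mul_choose c ▸ succ_mul_catalan_eq_centralBinom c)
  have hsucc : ((2 * c).choose (c + 1) * (c + 1) : ℤ) = (2 * c).choose c * c := by
    exact_mod_cast (show 2 * c - c = c by omega) ▸ Nat.choose_succ_right_eq (2 * c) c
  have hc : (c + 1 : ℤ) ≠ 0 := by positivity
  have : (ballot (2 * c) 1 : ℤ) = catalan c :=
    mul_left_cancel₀ hc (by rw [hrefl]; linear_combination -hcat - hsucc)
  exact_mod_cast this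

/-- Expanding `ballot (m + 1)` resp. `ballot (n + 1)` by the recursion, both sides become the
same two sums up to a shift of the index; the boundary terms vanish. -/
lemma sum_range_mul_succ (n m : ℕ) :
    ∑ e ∈ range (n + m + 3), ballot n e * ballot (m + 1) e
      = ∑ e ∈ range (n + m + 3), ballot (n + 1) e * ballot m e := by
  simp only [sum_range_succ' _ (n + m + 2), zero_right, mul_zero, add_zero, succ_succ,
    mul_add, add_mul, sum_add_distrib]
  have h₁ : ∑ e ∈ range (n + m + 2), ballot n (e + 1) * ballot m e
      = ∑ e ∈ range (n + m + 2), ballot n (e + 2) * ballot m (e + 1) := by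
    rw [sum_range_succ', sum_range_succ _ (n + m + 1), zero_right, mul_zero, add_zero,
      eq_zero_of_lt (by omega : n + 1 < n + m + 1 + 2), zero_mul, add_zero]
  have h₂ : ∑ e ∈ range (n + m + 2), ballot n (e + 1) * ballot m (e + 2)
      = ∑ e ∈ range (n + m + 2), ballot n e * ballot m (e + 1) := by
    conv_lhs => rw [sum_range_succ, eq_zero_of_lt (by omega : m + 1 < n + m + 1 + 2), mul_zero,
      add_zero]
    conv_rhs => rw [sum_range_succ', zero_right, zero_mul, add_zero]
  rw [h₁, h₂, add_comm]

theorem sum_range_mul (n m : ℕ) :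
    ∑ e ∈ range (n + m + 2), ballot n e * ballot m e = ballot (n + m) 1 := by
  induction m generalizing n with
  | zero => simp [zero_left]
  | succ m ih =>
    rw [show n + (m + 1) + 2 = n + m + 3 by ring, sum_range_mul_succ,
      show n + m + 3 = n + 1 + m + 2 by ring, ih, add_right_comm, add_assoc]

end ballot

namespace PMPath

instance {n : ℕ} : IsEmpty (PMPath (n + 1) 0) :=
  ⟨fun p => by simpa [p.2.2.2.2] using p.2.1 (Fin.last (n + 1))⟩

instance : Unique (PMPath 0 1) where
  default := ⟨fun _ => 1, by simp⟩
  uniq p := Subtype.ext (funext fun j => by rw [Fin.fin_one_eq_zero j]; exact p.2.2.2.1)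

lemma isEmpty_zero {e : ℕ} (he : e ≠ 1) : IsEmpty (PMPath 0 e) :=
  ⟨fun p => he (p.2.2.2.2.symm.trans p.2.2.2.1)⟩

def snocEquiv {n a f : ℕ} (hf : 1 ≤ f) (haf : ((a : ℤ) - f).natAbs = 1) :
    PMPath n a ≃ {p : PMPath (n + 1) f // p.1 (Fin.last n).castSucc = a} where
  toFun q := ⟨⟨Fin.snoc q.1 f, by
      refine ⟨Fin.lastCases (by simpa using hf) (fun j => by simpa using q.2.1 j), ?_, ?_, ?_⟩
      · refine Fin.lastCases ?_ (fun j => ?_)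
        · simpa [q.2.2.2.2] using haf
        · simpa only [Fin.succ_castSucc, Fin.snoc_castSucc] using q.2.2.1 j
      · simpa using q.2.2.2.1
      · simp⟩, by simpa using q.2.2.2.2⟩
  invFun p := ⟨Fin.init p.1.1, fun j => p.1.2.1 _,
    fun j => by simpa [Fin.init] using p.1.2.2.1 j.castSucc, p.1.2.2.2.1, p.2⟩
  left_inv q := Subtype.ext (Fin.init_snoc (α := fun _ => ℕ) _ _)
  right_inv p := by
    apply Subtype.ext; apply Subtype.ext
    conv_rhs => rw [← Fin.snoc_init_self p.1.1, p.1.2.2.2.2]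

lemma penultimate_eq {n e : ℕ} (p : PMPath (n + 1) (e + 1)) :
    p.1 (Fin.last n).castSucc = e ∨ p.1 (Fin.last n).castSucc = e + 2 := by
  have := p.2.2.1 (Fin.last n)
  rw [Fin.succ_last, p.2.2.2.2] at this
  omega

def succEquiv (n e : ℕ) : PMPath (n + 1) (e + 1) ≃ PMPath n e ⊕ PMPath n (e + 2) :=
  (Equiv.sumCompl fun p : PMPath (n + 1) (e + 1) => p.1 (Fin.last n).castSucc = e).symm.trans <|
    Equiv.sumCongr (snocEquiv (by omega) (by simp)).symm <|
      (Equiv.subtypeEquivRight fun p => by have := penultimate_eq p; omega).trans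
        (snocEquiv (by omega) (by simp)).symm

instance finite : ∀ n e, Finite (PMPath n e)
  | 0, e => by
    by_cases he : e = 1
    · subst he; infer_instance
    · have := isEmpty_zero he; infer_instance
  | _ + 1, 0 => inferInstance
  | n + 1, e + 1 =>
    have := finite n e
    have := finite n (e + 2)
    Finite.of_equiv _ (succEquiv n e).symm

theorem card_eq_ballot : ∀ n e, Nat.card (PMPath n e) = ballot n e
  | 0, e => by
    by_cases he : e = 1
    · subst he; simp [ballot.zero_left]
    · have := isEmpty_zero he; simp [ballot.zero_left, he]
  | n + 1, 0 => by simp [ballot.zero_right]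
  | n + 1, e + 1 => by
    rw [Nat.card_congr (succEquiv n e), Nat.card_sum, card_eq_ballot n e,
      card_eq_ballot n (e + 2), ballot.succ_succ]

end PMPath

lemma sigma_eq_mul_ballot (k h : ℕ) : sigma k h = k * ballot (k - 1) (2 * h - k % 2) := by
  rw [sigma, PMPath.card_eq_ballot]
  congr 2
  split_ifs with hk <;> rw [Nat.odd_iff] at hk <;> omega

lemma sum_Icc_ballot_mul_ballot {k₁ k₂ : ℕ} (h₁ : 0 < k₁) (h₂ : 0 < k₂)
    (hpar : k₁ % 2 = k₂ % 2) :
    ∑ h ∈ Icc 1 (min ((k₁ + 2) / 2) ((k₂ + 2) / 2)),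
        ballot (k₁ - 1) (2 * h - k₁ % 2) * ballot (k₂ - 1) (2 * h - k₁ % 2)
      = ballot (k₁ + k₂ - 2) 1 := by
  rw [show k₁ + k₂ - 2 = k₁ - 1 + (k₂ - 1) by omega, ← ballot.sum_range_mul]
  refine sum_bij_ne_zero (fun h _ _ => 2 * h - k₁ % 2) ?_ ?_ ?_ (fun _ _ _ => rfl)
  · intro h _ hne
    obtain ⟨-, he, -⟩ := ballot.bounds_of_ne_zero (left_ne_zero_of_mul hne)
    rw [mem_range]
    omega
  · intro a ha _ b hb _ hab
    rw [mem_Icc] at ha hb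
    omega
  · intro e _ hne
    obtain ⟨he₀, he₁, hodd⟩ := ballot.bounds_of_ne_zero (left_ne_zero_of_mul hne)
    obtain ⟨-, he₂, -⟩ := ballot.bounds_of_ne_zero (right_ne_zero_of_mul hne)
    rw [Nat.odd_iff] at hodd
    have hE : 2 * ((e + 1) / 2) - k₁ % 2 = e := by omega
    exact ⟨(e + 1) / 2, by rw [mem_Icc]; omega, by rwa [hE], hE⟩

/-- For positive integers `k₁, k₂` of the same parity with
`rᵢ = ⌈(kᵢ+1)/2⌉`,
`∑_{h=1}^{min(r₁,r₂)} σ_{k₁,h}·σ_{k₂,h} = (2k₁k₂/(k₁+k₂))·C(k₁+k₂-2, (k₁+k₂-2)/2)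
 = k₁k₂·Catalan((k₁+k₂-2)/2)`. -/
theorem sum_sigma_mul_sigma (k₁ k₂ : ℕ) (h₁ : 0 < k₁) (h₂ : 0 < k₂)
    (hpar : k₁ % 2 = k₂ % 2) :
    (∑ h ∈ Finset.Icc 1 (min ((k₁ + 2) / 2) ((k₂ + 2) / 2)), sigma k₁ h * sigma k₂ h
      = k₁ * k₂ * catalan ((k₁ + k₂ - 2) / 2)) ∧
    ((∑ h ∈ Finset.Icc 1 (min ((k₁ + 2) / 2) ((k₂ + 2) / 2)),
        sigma k₁ h * sigma k₂ h : ℝ)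
      = 2 * k₁ * k₂ / (k₁ + k₂) *
          ((k₁ + k₂ - 2).choose ((k₁ + k₂ - 2) / 2))) := by
  obtain ⟨c, hc⟩ : ∃ c, k₁ + k₂ - 2 = 2 * c := ⟨(k₁ + k₂ - 2) / 2, by omega⟩
  have hsum : ∑ h ∈ Icc 1 (min ((k₁ + 2) / 2) ((k₂ + 2) / 2)), sigma k₁ h * sigma k₂ h
      = k₁ * k₂ * catalan c := by
    simp only [sigma_eq_mul_ballot, ← hpar, mul_mul_mul_comm, ← mul_sum]
    rw [sum_Icc_ballot_mul_ballot h₁ h₂ hpar, hc, ballot.two_mul_one_eq_catalan]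
  rw [hc, Nat.mul_div_cancel_left c two_pos]
  refine ⟨hsum, ?_⟩
  have hreal := congrArg (Nat.cast : ℕ → ℝ) hsum
  push_cast at hreal
  rw [hreal]
  have hk : (k₁ + k₂ : ℝ) = 2 * (c + 1) := by norm_cast; omega
  rw [← Nat.centralBinom_eq_two_mul_choose, ← succ_mul_catalan_eq_centralBinom, hk]
  push_cast
  field_simp
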